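/- arXiv:math/0601592 — 2 statements merged into one kernel-verified Lean document; each statement's English description precedes it below -/
import Mathlib

section
/- For every k ≥ 4 the Hanoi Towers group H(k) is not contracting: for every N there exists g ∈ H(k) with word length |g| ≥ N (with respect to the generating set of all a_{(ij)}) and some letter x ∈ {0,…,k−1} such that the section g_x has word length |g_x| ≥ |g|. -/
/-- The generator `a_{(ij)}` of the Hanoi Towers group, acting on finite words:
`a_{(ij)}(iw) = jw`, `a_{(ij)}(jw) = iw`, `a_{(ij)}(xw) = x · a_{(ij)}(w)` for `x ∉ {i,j}`,
and `a_{(ij)}(ε) = ε`. -/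
def hMove {k : ℕ} (i j : Fin k) : List (Fin k) → List (Fin k)
  | [] => []
  | x :: w => if x = i then j :: w else if x = j then i :: w else x :: hMove i j w

theorem hMove_involutive {k : ℕ} (i j : Fin k) : ∀ l, hMove i j (hMove i j l) = l := by
  intro l
  induction l with
  | nil => rfl
  | cons x w ih =>
    by_cases hxi : x = i
    · by_cases hij : j = i <;> simp [hMove, hxi, hij]
    · by_cases hxj : x = j
      · by_cases hij : j = i <;> simp [hMove, hxi, hxj, hij]
      · simp [hMove, hxi, hxj, ih]

/-- The generator `a_{(ij)}` as a permutation of the set of finite words. -/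
def hGen {k : ℕ} (i j : Fin k) : Equiv.Perm (List (Fin k)) :=
  ⟨hMove i j, hMove i j, hMove_involutive i j, hMove_involutive i j⟩

/-- The Hanoi Towers group `H(k)`, the subgroup of the permutation group of the set of
finite words over `{0, …, k-1}` generated by the `a_{(ij)}` for `i < j`. -/
def HanoiGroup (k : ℕ) : Subgroup (Equiv.Perm (List (Fin k))) :=
  Subgroup.closure {g | ∃ i j : Fin k, i < j ∧ g = hGen i j}

theorem hMove_length {k : ℕ} (i j : Fin k) (l : List (Fin k)) :
    (hMove i j l).length = l.length := by
  induction l with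
  | nil => rfl
  | cons x w ih =>
    by_cases hxi : x = i
    · by_cases hij : j = i <;> simp [hMove, hxi, hij]
    · by_cases hxj : x = j
      · by_cases hij : j = i <;> simp [hMove, hxi, hxj, hij]
      · simp [hMove, hxi, hxj, ih]

/-- Word length of a group element with respect to a set `S` of generators: the least `m`
such that `g` is a product of `m` elements of `S` (and `0` if no such `m` exists). -/
noncomputable def wordLength {G : Type*} [Group G] (S : Set G) (g : G) : ℕ :=
  sInf {m | ∃ l : List G, l.length = m ∧ (∀ s ∈ l, s ∈ S) ∧ l.prod = g}

/-- The section of a permutation `g` of the set of finite words at the letter `x`: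
`g_x(w)` is the word obtained from `g(xw)` by deleting its first letter. -/
def wordSection {k : ℕ} (g : Equiv.Perm (List (Fin k))) (x : Fin k) :
    List (Fin k) → List (Fin k) :=
  fun w => (g (x :: w)).tail

/-!
Generators `a_{(ij)}` with `i, j ≠ x` commute with prepending the letter `x`, so every element `g`
of the subgroup generated by the `a_{(ij)}`, `i, j ∈ {0, 1, 2}`, has `g_3 = g`. That subgroup
contains elements of arbitrarily large length: reading a word as the list of pegs of the discs,
smallest first, a generator is a legal Tower of Hanoi move, so the product `g` of the classical
solution moving `N` discs from peg `0` to peg `1` sends `0ᴺ` to `1ᴺ`. A generator changes at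
most one letter, hence the number of `0`s by at most one, so every word in the generators
representing `g` has length at least `N`.
-/

theorem hGen_apply {k : ℕ} (i j : Fin k) (w : List (Fin k)) : hGen i j w = hMove i j w := rfl

theorem hGen_comm {k : ℕ} (i j : Fin k) : hGen i j = hGen j i := by
  ext w : 1
  induction w with
  | nil => rfl
  | cons x w ih =>
    simp only [hGen_apply] at ih ⊢
    by_cases hxi : x = i <;> by_cases hxj : x = j <;> simp_all [hMove]

theorem hMove_cons_of_ne {k : ℕ} {i j x : Fin k} (hi : x ≠ i) (hj : x ≠ j) (w : List (Fin k)) :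
    hMove i j (x :: w) = x :: hMove i j w := by
  simp [hMove, hi, hj]

theorem hMove_replicate_append {k : ℕ} {i j x : Fin k} (hi : x ≠ i) (hj : x ≠ j) (n : ℕ)
    (w : List (Fin k)) :
    hMove i j (List.replicate n x ++ w) = List.replicate n x ++ hMove i j w := by
  induction n with
  | zero => rfl
  | succ n ih => simp [List.replicate_succ, hMove_cons_of_ne hi hj, ih]

theorem list_prod_hGen_apply_cons {k : ℕ} {x : Fin k} {l : List (Equiv.Perm (List (Fin k)))}
    (hl : ∀ s ∈ l, ∃ i j : Fin k, x ≠ i ∧ x ≠ j ∧ s = hGen i j) (w : List (Fin k)) :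
    l.prod (x :: w) = x :: l.prod w := by
  induction l with
  | nil => rfl
  | cons s l ih =>
    obtain ⟨i, j, hi, hj, rfl⟩ := hl s List.mem_cons_self
    rw [List.prod_cons, Equiv.Perm.mul_apply, ih fun s hs => hl s (List.mem_cons_of_mem _ hs),
      hGen_apply, hMove_cons_of_ne hi hj]
    rfl

theorem count_le_count_hMove_add_one {k : ℕ} (a i j : Fin k) (w : List (Fin k)) :
    w.count a ≤ (hMove i j w).count a + 1 := by
  induction w with
  | nil => simp [hMove]
  | cons x w ih =>
    by_cases hxi : x = i
    · subst hxi
      simp only [hMove, if_true, List.count_cons]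
      split_ifs <;> omega
    · by_cases hxj : x = j
      · subst hxj
        simp only [hMove, hxi, if_true, if_false, List.count_cons]
        split_ifs <;> omega
      · simp only [hMove_cons_of_ne hxi hxj, List.count_cons]
        omega

theorem count_le_count_prod_apply_add_length {k : ℕ} (a : Fin k)
    {l : List (Equiv.Perm (List (Fin k)))} (hl : ∀ s ∈ l, ∃ i j : Fin k, s = hGen i j)
    (w : List (Fin k)) :
    w.count a ≤ (l.prod w).count a + l.length := by
  induction l with
  | nil => simp
  | cons s l ih =>
    obtain ⟨i, j, rfl⟩ := hl s List.mem_cons_self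
    have hstep := count_le_count_hMove_add_one a i j (l.prod w)
    have hrest := ih fun s hs => hl s (List.mem_cons_of_mem _ hs)
    simp only [List.prod_cons, Equiv.Perm.mul_apply, hGen_apply, List.length_cons]
    omega

theorem le_wordLength {G : Type*} [Group G] {S : Set G} {g : G} {n : ℕ}
    (hg : ∃ l : List G, (∀ s ∈ l, s ∈ S) ∧ l.prod = g)
    (hn : ∀ l : List G, (∀ s ∈ l, s ∈ S) → l.prod = g → n ≤ l.length) :
    n ≤ wordLength S g := by
  obtain ⟨l, hlS, hl⟩ := hg
  refine le_csInf ⟨l.length, l, rfl, hlS, hl⟩ ?_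
  rintro _ ⟨m, rfl, hmS, hm⟩
  exact hn m hmS hm

-- `List.prod` acts right to left: the last block, moving `n` discs from `i` to `aux`, acts first.
def hanoiMoves {k : ℕ} (i j aux : Fin k) : ℕ → List (Equiv.Perm (List (Fin k)))
  | 0 => []
  | n + 1 => hanoiMoves aux j i n ++ [hGen i j] ++ hanoiMoves i aux j n

theorem hanoiMoves_prod_apply {k : ℕ} (n : ℕ) {i j aux : Fin k} (hij : i ≠ j) (hia : i ≠ aux)
    (hja : j ≠ aux) (w : List (Fin k)) :
    (hanoiMoves i j aux n).prod (List.replicate n i ++ w) = List.replicate n j ++ w := by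
  induction n generalizing i j aux w with
  | zero => simp [hanoiMoves]
  | succ n ih =>
    have hmove : hGen i j (List.replicate n aux ++ i :: w) = List.replicate n aux ++ j :: w := by
      rw [hGen_apply, hMove_replicate_append hia.symm hja.symm]
      simp [hMove]
    simp only [hanoiMoves, List.prod_append, List.prod_cons, Equiv.Perm.mul_apply,
      List.replicate_succ', List.append_assoc, List.singleton_append,
      ih hia hij hja.symm, hmove, ih hja.symm hia.symm hij.symm]

theorem mem_hanoiMoves {k : ℕ} (n : ℕ) {i j aux : Fin k} {s : Equiv.Perm (List (Fin k))}
    (hs : s ∈ hanoiMoves i j aux n) : s = hGen i j ∨ s = hGen i aux ∨ s = hGen j aux := by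
  induction n generalizing i j aux with
  | zero => simp [hanoiMoves] at hs
  | succ n ih =>
    simp only [hanoiMoves, List.mem_append, List.mem_singleton] at hs
    rcases hs with (hs | rfl) | hs
    · rcases ih hs with h | h | h <;> simp [h, hGen_comm aux, hGen_comm j i]
    · simp
    · rcases ih hs with h | h | h <;> simp [h, hGen_comm aux]

theorem le_length_of_prod_eq_hanoiMoves {k : ℕ} (n : ℕ) {i j aux : Fin k} (hij : i ≠ j)
    (hia : i ≠ aux) (hja : j ≠ aux) {l : List (Equiv.Perm (List (Fin k)))}
    (hl : ∀ s ∈ l, ∃ a b : Fin k, s = hGen a b) (hprod : l.prod = (hanoiMoves i j aux n).prod) :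
    n ≤ l.length := by
  have hcount := count_le_count_prod_apply_add_length i hl (List.replicate n i)
  rw [hprod, ← List.append_nil (List.replicate n i), hanoiMoves_prod_apply n hij hia hja] at hcount
  simpa [List.count_replicate, hij.symm] using hcount

theorem hanoiMoves_prod_cons_of_ne {k : ℕ} (n : ℕ) {i j aux x : Fin k} (hi : x ≠ i) (hj : x ≠ j)
    (ha : x ≠ aux) (w : List (Fin k)) :
    (hanoiMoves i j aux n).prod (x :: w) = x :: (hanoiMoves i j aux n).prod w := by
  refine list_prod_hGen_apply_cons (fun s hs => ?_) w
  rcases mem_hanoiMoves n hs with rfl | rfl | rfl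
  exacts [⟨i, j, hi, hj, rfl⟩, ⟨i, aux, hi, ha, rfl⟩, ⟨j, aux, hj, ha, rfl⟩]

/-- For every `k ≥ 4` the Hanoi Towers group `H(k)` is not contracting:
for every `N` there exist `g ∈ H(k)` of word length at least `N` and a letter `x` such
that the section `g_x` (an element of `H(k)`) has word length at least that of `g`. -/
theorem hanoi_not_contracting (k : ℕ) (hk : 4 ≤ k) :
    ∀ N : ℕ, ∃ g ∈ HanoiGroup k,
      N ≤ wordLength {g : Equiv.Perm (List (Fin k)) | ∃ i j : Fin k, i < j ∧ g = hGen i j} g ∧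
      ∃ x : Fin k, ∃ h ∈ HanoiGroup k,
        (∀ w : List (Fin k), h w = wordSection g x w) ∧
        wordLength {g : Equiv.Perm (List (Fin k)) | ∃ i j : Fin k, i < j ∧ g = hGen i j} g ≤
          wordLength {g : Equiv.Perm (List (Fin k)) | ∃ i j : Fin k, i < j ∧ g = hGen i j} h := by
  intro N
  set S := {g : Equiv.Perm (List (Fin k)) | ∃ i j : Fin k, i < j ∧ g = hGen i j}
  let p : Fin 4 → Fin k := Fin.castLE hk
  have hp : StrictMono p := Fin.strictMono_castLE hk
  have h01 : p 0 < p 1 := hp (by decide)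
  have h02 : p 0 < p 2 := hp (by decide)
  have h12 : p 1 < p 2 := hp (by decide)
  set L := hanoiMoves (p 0) (p 1) (p 2) N
  have hLS : ∀ s ∈ L, s ∈ S := fun s hs => by
    rcases mem_hanoiMoves N hs with rfl | rfl | rfl
    exacts [⟨_, _, h01, rfl⟩, ⟨_, _, h02, rfl⟩, ⟨_, _, h12, rfl⟩]
  have hL : L.prod ∈ HanoiGroup k :=
    (HanoiGroup k).list_prod_mem fun s hs => Subgroup.subset_closure (hLS s hs)
  refine ⟨L.prod, hL, ?_, p 3, L.prod, hL, fun w => ?_, le_rfl⟩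
  · refine le_wordLength ⟨L, hLS, rfl⟩ fun l hlS hprod => ?_
    refine le_length_of_prod_eq_hanoiMoves N h01.ne h02.ne h12.ne (fun s hs => ?_) hprod
    obtain ⟨a, b, -, rfl⟩ := hlS s hs
    exact ⟨a, b, rfl⟩
  · rw [wordSection, hanoiMoves_prod_cons_of_ne N (hp (by decide : (0 : Fin 4) < 3)).ne'
      (hp (by decide : (1 : Fin 4) < 3)).ne' (hp (by decide : (2 : Fin 4) < 3)).ne']
    rfl
end

section
/- For k = 3, the diameter of the level-n Schreier graph Γ_n of the Hanoi Towers group H(3) equals 2^n − 1 for every n ≥ 0. -/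
/-- The action of the generator `a_{(ij)}` on words of length `n`, viewed as functions
`Fin n → Fin k` (via the word `List.ofFn u`; the action preserves length). -/
def levelMove {k n : ℕ} (i j : Fin k) (u : Fin n → Fin k) : Fin n → Fin k :=
  fun m => (hMove i j (List.ofFn u)).get
    (Fin.cast (by rw [hMove_length, List.length_ofFn]) m)

/-- The level-`n` Schreier graph `Γ_n` of `H(k)`: vertices are the `k^n` words of length
`n` over `{0, …, k-1}`, and `u`, `v` are adjacent iff `u ≠ v` and some generator
`a_{(ij)}` (with `i < j`) maps one to the other. -/
def levelGraph (k n : ℕ) : SimpleGraph (Fin n → Fin k) where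
  Adj u v := u ≠ v ∧ ∃ i j : Fin k, i < j ∧ (levelMove i j u = v ∨ levelMove i j v = u)
  symm := by
    constructor
    rintro u v ⟨huv, i, j, hij, h⟩
    exact ⟨huv.symm, i, j, hij, h.symm⟩
  loopless := ⟨fun u h => h.1 rfl⟩

/-!
Read a word as a Tower of Hanoi configuration on three pegs: letter `m` is the peg of the
`m`-th smallest disk, and `a_{(ij)}` moves the smallest disk on pegs `i`, `j` to the other one.

Upper bound, by induction: if the largest disks of `u` and `v` lie on pegs `a ≠ b`, bring the
`n` smaller disks of `u` onto the third peg, move the largest disk from `a` to `b`, then bring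
the smaller disks to their places in `v`; this takes `(2^n - 1) + 1 + (2^n - 1)` moves.

Lower bound: the classical recursive count `hanoiPotential t` of the moves needed to gather a
configuration on peg `t` changes by at most one along an edge; it is `0` at `t^n` and
`2^n - 1` at `a^n` for `a ≠ t`.
-/

section hMove

variable {k : ℕ} (i j : Fin k)

theorem hMove_comm : hMove i j = hMove j i := by
  funext l
  induction l with
  | nil => rfl
  | cons x w ih =>
    simp only [hMove]
    split_ifs <;> simp_all

theorem hMove_append_of_forall_ne {l : List (Fin k)} (hl : ∀ z ∈ l, z ≠ i ∧ z ≠ j)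
    (r : List (Fin k)) : hMove i j (l ++ r) = l ++ hMove i j r := by
  induction l with
  | nil => rfl
  | cons z l ih =>
    obtain ⟨hzi, hzj⟩ := hl z List.mem_cons_self
    simp [hMove, hzi, hzj, ih fun z hz => hl z (List.mem_cons_of_mem _ hz)]

theorem hMove_append_of_ne {l : List (Fin k)} (hl : hMove i j l ≠ l) (r : List (Fin k)) :
    hMove i j (l ++ r) = hMove i j l ++ r := by
  induction l with
  | nil => exact absurd rfl hl
  | cons z l ih =>
    by_cases hzi : z = i
    · simp [hMove, hzi]
    by_cases hzj : z = j
    · subst hzj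
      simp [hMove, hzi]
    have hl' : hMove i j l ≠ l := by simpa [hMove, hzi, hzj] using hl
    simp [hMove, hzi, hzj, ih hl']

theorem hMove_eq_self_or_exists (l : List (Fin k)) :
    hMove i j l = l ∨ ∃ q x y p, (∀ z ∈ q, z ≠ i ∧ z ≠ j) ∧ (x = i ∧ y = j ∨ x = j ∧ y = i) ∧
      l = q ++ x :: p ∧ hMove i j l = q ++ y :: p := by
  induction l with
  | nil => exact .inl rfl
  | cons z l ih =>
    by_cases hzi : z = i
    · exact .inr ⟨[], i, j, l, by simp, .inl ⟨rfl, rfl⟩, by rw [hzi]; rfl, by simp [hMove, hzi]⟩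
    by_cases hzj : z = j
    · exact .inr ⟨[], j, i, l, by simp, .inr ⟨rfl, rfl⟩, by rw [hzj]; rfl,
        by simp [hMove, hzj]⟩
    have hcons : hMove i j (z :: l) = z :: hMove i j l := by simp [hMove, hzi, hzj]
    rcases ih with h | ⟨q, x, y, p, hq, hxy, hl, hm⟩
    · exact .inl (by rw [hcons, h])
    · refine .inr ⟨z :: q, x, y, p, ?_, hxy, by rw [hl]; rfl, by rw [hcons, hm]; rfl⟩
      simpa [hzi, hzj] using hq

end hMove

theorem List.ofFn_snoc {α : Type*} {n : ℕ} (u : Fin n → α) (a : α) :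
    List.ofFn (Fin.snoc u a : Fin (n + 1) → α) = List.ofFn u ++ [a] := by
  rw [List.ofFn_succ', List.concat_eq_append]
  simp

section levelGraph

variable {k n : ℕ}

theorem ofFn_levelMove (i j : Fin k) (u : Fin n → Fin k) :
    List.ofFn (levelMove i j u) = hMove i j (List.ofFn u) :=
  List.ext_get (by simp [hMove_length]) fun m _ _ => by simp [levelMove]

theorem levelMove_eq_iff {i j : Fin k} {u v : Fin n → Fin k} :
    levelMove i j u = v ↔ hMove i j (List.ofFn u) = List.ofFn v := by
  rw [← ofFn_levelMove, List.ofFn_inj]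

theorem levelGraph_adj_of_levelMove {i j : Fin k} (hij : i ≠ j) {u v : Fin n → Fin k}
    (huv : u ≠ v) (h : levelMove i j u = v) : (levelGraph k n).Adj u v := by
  rcases hij.lt_or_gt with hij | hji
  · exact ⟨huv, i, j, hij, .inl h⟩
  · exact ⟨huv, j, i, hji, .inl (by rwa [levelMove_eq_iff, hMove_comm, ← levelMove_eq_iff])⟩

theorem levelMove_snoc {i j : Fin k} {u : Fin n → Fin k} (h : levelMove i j u ≠ u) (a : Fin k) :
    levelMove i j (Fin.snoc u a : Fin (n + 1) → Fin k) = Fin.snoc (levelMove i j u) a := by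
  rw [levelMove_eq_iff, List.ofFn_snoc, List.ofFn_snoc, ofFn_levelMove]
  rw [Ne, levelMove_eq_iff] at h
  exact hMove_append_of_ne i j h [a]

theorem levelGraph_adj_snoc {u v : Fin n → Fin k} (h : (levelGraph k n).Adj u v) (a : Fin k) :
    (levelGraph k (n + 1)).Adj (Fin.snoc u a) (Fin.snoc v a) := by
  obtain ⟨huv, i, j, hij, hmove⟩ := h
  have hsnoc : (Fin.snoc u a : Fin (n + 1) → Fin k) ≠ Fin.snoc v a := fun h =>
    huv (by simpa using congrArg Fin.init h)
  refine ⟨hsnoc, i, j, hij, ?_⟩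
  rcases hmove with h | h
  · exact .inl (by rw [levelMove_snoc (h ▸ huv.symm), h])
  · exact .inr (by rw [levelMove_snoc (h ▸ huv), h])

def levelGraphSnocHom (a : Fin k) : levelGraph k n →g levelGraph k (n + 1) where
  toFun u := Fin.snoc u a
  map_rel' h := levelGraph_adj_snoc h a

theorem levelGraph_edist_snoc_le (a : Fin k) (u v : Fin n → Fin k) :
    (levelGraph k (n + 1)).edist (Fin.snoc u a) (Fin.snoc v a) ≤ (levelGraph k n).edist u v :=
  le_iInf fun p => (SimpleGraph.edist_le (p.map (levelGraphSnocHom a))).trans_eq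
    (by rw [SimpleGraph.Walk.length_map])

end levelGraph

/-- The peg different from `x` and `y` when `x ≠ y`. -/
def third (x y : Fin 3) : Fin 3 := -(x + y)

theorem third_ne_left : ∀ {x y : Fin 3}, x ≠ y → third x y ≠ x := by decide

theorem third_ne_right : ∀ {x y : Fin 3}, x ≠ y → third x y ≠ y := by decide

theorem eq_third : ∀ {x y z : Fin 3}, x ≠ y → z ≠ x → z ≠ y → z = third x y := by decide

/-- The number of moves needed to gather the configuration `w` on peg `t`, where `w` lists the
pegs from the largest disk down (the reverse of the words acted on by `hMove`): a largest disk
off `t` can only move once all smaller disks sit on the third peg. -/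
def hanoiPotential : Fin 3 → List (Fin 3) → ℕ
  | _, [] => 0
  | t, x :: w => if x = t then hanoiPotential t w else 2 ^ w.length + hanoiPotential (third x t) w

theorem hanoiPotential_replicate_self (t : Fin 3) (s : ℕ) :
    hanoiPotential t (List.replicate s t) = 0 := by
  induction s with
  | zero => rfl
  | succ s ih => simp [List.replicate_succ, hanoiPotential, ih]

theorem hanoiPotential_replicate_add_one {c t : Fin 3} (hct : c ≠ t) (s : ℕ) :
    hanoiPotential t (List.replicate s c) + 1 = 2 ^ s := by
  induction s generalizing t with
  | zero => rfl
  | succ s ih =>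
    rw [List.replicate_succ, hanoiPotential, if_neg hct, List.length_replicate, add_assoc,
      ih (third_ne_left hct).symm, pow_succ, mul_two]

/-- A disk moves from `x` to `y` while the `s` smaller disks sit on the third peg `c`. -/
theorem hanoiPotential_append_cons_replicate_le {x y c : Fin 3} (hxy : x ≠ y) (hxc : x ≠ c)
    (hyc : y ≠ c) (s : ℕ) (q : List (Fin 3)) (t : Fin 3) :
    hanoiPotential t (q ++ x :: List.replicate s c) ≤
      hanoiPotential t (q ++ y :: List.replicate s c) + 1 := by
  induction q generalizing t with
  | nil =>
    have hcx := hanoiPotential_replicate_add_one hxc.symm s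
    have hcy := hanoiPotential_replicate_add_one hyc.symm s
    have hcc := hanoiPotential_replicate_self c s
    rcases eq_or_ne t x with rfl | htx
    · simp only [List.nil_append, hanoiPotential, if_pos, if_neg hxy.symm, List.length_replicate]
      omega
    rcases eq_or_ne t y with rfl | hty
    · simp only [List.nil_append, hanoiPotential, if_pos, if_neg hxy, List.length_replicate,
        ← eq_third hxy hxc.symm hyc.symm]
      omega
    obtain rfl : t = c := (eq_third hxy htx hty).trans (eq_third hxy hxc.symm hyc.symm).symm
    simp only [List.nil_append, hanoiPotential, if_neg hxc, if_neg hyc, List.length_replicate,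
      ← eq_third hxc hxy.symm hyc, ← eq_third hyc hxy hxc]
    omega
  | cons z q ih =>
    by_cases hzt : z = t
    · simpa [hanoiPotential, hzt] using ih t
    · simp only [List.cons_append, hanoiPotential, if_neg hzt, List.length_append,
        List.length_cons, List.length_replicate]
      linarith [ih (third z t)]

theorem hanoiPotential_hMove_le {i j : Fin 3} (hij : i ≠ j) (l : List (Fin 3)) (t : Fin 3) :
    hanoiPotential t (hMove i j l).reverse ≤ hanoiPotential t l.reverse + 1 := by
  rcases hMove_eq_self_or_exists i j l with h | ⟨q, x, y, p, hq, hxy, rfl, hm⟩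
  · rw [h]
    omega
  have hq' : q = List.replicate q.length (third i j) :=
    List.eq_replicate_iff.mpr ⟨rfl, fun z hz => eq_third hij (hq z hz).1 (hq z hz).2⟩
  rw [hm, hq']
  simp only [List.reverse_append, List.reverse_cons, List.reverse_replicate, List.append_assoc,
    List.singleton_append]
  rcases hxy with ⟨rfl, rfl⟩ | ⟨rfl, rfl⟩
  · exact hanoiPotential_append_cons_replicate_le hij.symm (third_ne_right hij).symm
      (third_ne_left hij).symm _ _ _
  · exact hanoiPotential_append_cons_replicate_le hij (third_ne_left hij).symm
      (third_ne_right hij).symm _ _ _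

section levelGraphThree

variable {n : ℕ}

theorem hanoiPotential_le_of_adj {u v : Fin n → Fin 3} (h : (levelGraph 3 n).Adj u v)
    (t : Fin 3) :
    hanoiPotential t (List.ofFn u).reverse ≤ hanoiPotential t (List.ofFn v).reverse + 1 := by
  obtain ⟨-, i, j, hij, h | h⟩ := h <;> rw [levelMove_eq_iff] at h
  · rw [← hMove_involutive i j (List.ofFn u), h]
    exact hanoiPotential_hMove_le hij.ne _ _
  · rw [← h]
    exact hanoiPotential_hMove_le hij.ne _ _

theorem hanoiPotential_le_add_length {u v : Fin n → Fin 3} (p : (levelGraph 3 n).Walk u v)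
    (t : Fin 3) :
    hanoiPotential t (List.ofFn u).reverse ≤ hanoiPotential t (List.ofFn v).reverse + p.length := by
  induction p with
  | nil => simp
  | cons h p ih =>
    rw [SimpleGraph.Walk.length_cons]
    linarith [hanoiPotential_le_of_adj h t]

theorem two_pow_le_levelGraph_edist_const_add_one {a b : Fin 3} (hab : a ≠ b) :
    2 ^ n ≤ (levelGraph 3 n).edist (fun _ => a) (fun _ => b) + 1 := by
  rcases eq_or_ne ((levelGraph 3 n).edist (fun _ => a) (fun _ => b)) ⊤ with h | h
  · simp [h]
  obtain ⟨p, hp⟩ := (SimpleGraph.reachable_of_edist_ne_top h).exists_walk_length_eq_edist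
  have hpot := hanoiPotential_le_add_length p b
  rw [List.ofFn_const, List.ofFn_const, List.reverse_replicate, List.reverse_replicate,
    hanoiPotential_replicate_self] at hpot
  have hstart := hanoiPotential_replicate_add_one hab n
  rw [← hp]
  exact_mod_cast (by omega : 2 ^ n ≤ p.length + 1)

theorem levelGraph_adj_snoc_third {a b : Fin 3} (hab : a ≠ b) :
    (levelGraph 3 (n + 1)).Adj (Fin.snoc (fun _ => third a b) a)
      (Fin.snoc (fun _ => third a b) b) := by
  refine levelGraph_adj_of_levelMove hab (fun h => hab (by simpa using congrFun h (Fin.last n))) ?_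
  rw [levelMove_eq_iff, List.ofFn_snoc, List.ofFn_snoc, List.ofFn_const,
    hMove_append_of_forall_ne]
  · simp [hMove]
  · intro z hz
    rw [List.eq_of_mem_replicate hz]
    exact ⟨third_ne_left hab, third_ne_right hab⟩

theorem levelGraph_three_edist_add_one_le (u v : Fin n → Fin 3) :
    (levelGraph 3 n).edist u v + 1 ≤ 2 ^ n := by
  induction n with
  | zero => simp [Subsingleton.elim u v]
  | succ n ih =>
    induction u using Fin.snocCases with | snoc u a => ?_
    induction v using Fin.snocCases with | snoc v b => ?_
    rcases eq_or_ne a b with rfl | hab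
    · calc _ ≤ (levelGraph 3 n).edist u v + 1 := by
            gcongr
            exact levelGraph_edist_snoc_le a u v
        _ ≤ 2 ^ n := ih u v
        _ ≤ 2 ^ (n + 1) := pow_le_pow_right₀ one_le_two n.le_succ
    set G := levelGraph 3 (n + 1)
    set w : Fin n → Fin 3 := fun _ => third a b
    have hmove : G.edist (Fin.snoc w a) (Fin.snoc w b) = 1 :=
      SimpleGraph.edist_eq_one_iff_adj.mpr (levelGraph_adj_snoc_third hab)
    calc G.edist (Fin.snoc u a) (Fin.snoc v b) + 1
        ≤ G.edist (Fin.snoc u a) (Fin.snoc w a) + (G.edist (Fin.snoc w a) (Fin.snoc w b) +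
            G.edist (Fin.snoc w b) (Fin.snoc v b)) + 1 := by
          gcongr
          exact SimpleGraph.edist_triangle.trans (by gcongr; exact SimpleGraph.edist_triangle)
      _ = (G.edist (Fin.snoc u a) (Fin.snoc w a) + 1) +
            (G.edist (Fin.snoc w b) (Fin.snoc v b) + 1) := by
          rw [hmove]
          ring
      _ ≤ ((levelGraph 3 n).edist u w + 1) + ((levelGraph 3 n).edist w v + 1) := by
          gcongr <;> exact levelGraph_edist_snoc_le _ _ _
      _ ≤ 2 ^ n + 2 ^ n := add_le_add (ih u w) (ih w v)
      _ = 2 ^ (n + 1) := by ring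

theorem levelGraph_three_ediam_add_one : (levelGraph 3 n).ediam + 1 = 2 ^ n := by
  refine le_antisymm ?_ ?_
  · obtain ⟨u, v, huv⟩ := (levelGraph 3 n).exists_edist_eq_ediam_of_finite
    exact huv ▸ levelGraph_three_edist_add_one_le u v
  · calc 2 ^ n ≤ (levelGraph 3 n).edist (fun _ => 0) (fun _ => 2) + 1 :=
          two_pow_le_levelGraph_edist_const_add_one (by decide)
      _ ≤ (levelGraph 3 n).ediam + 1 := by
          gcongr
          exact SimpleGraph.edist_le_ediam

end levelGraphThree

/-- For `k = 3`, the diameter of the level-`n` Schreier graph `Γ_n` of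
the Hanoi Towers group `H(3)` equals `2^n - 1` for every `n`. -/
theorem hanoi3_diameter (n : ℕ) : (levelGraph 3 n).diam = 2 ^ n - 1 := by
  have h := levelGraph_three_ediam_add_one (n := n)
  obtain ⟨d, hd⟩ : ∃ d : ℕ, (d : ℕ∞) = (levelGraph 3 n).ediam :=
    ENat.ne_top_iff_exists.mp fun htop => by simpa [htop] using h.symm
  rw [SimpleGraph.diam, ← hd, ENat.toNat_natCast]
  rw [← hd] at h
  norm_cast at h
  omega
end
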